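/- For all real numbers δ ≥ C ≥ 1, we have (δ + C)·ln(δ/C + 1) − δ ≥ (1/(2C))·δ·ln δ. -/

import Mathlib

/-!
The left side is `C h(δ/C)` with Bennett's function `h(u) = (1 + u) log (1 + u) - u`.
Put `g(y) = (y + C) log (y/C + 1) - y - y log y / (2C)`. Its derivative is
`log (y/C + 1) - (log y + 1)/(2C)`, which is nonnegative for `y ≥ C` because
`(y/C + 1)² ≥ 4y/C` (AM–GM) and `log C + 1 ≤ 2C log 2`. Hence `g` increases on `[C, ∞)`,
and `g(C) = 2C log 2 - C - (log C)/2 ≥ 0` follows from `e log C ≤ C` and `log 2 > 1/2 + 1/(2e)`.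
-/

open Real Set

namespace Real

lemma log_add_one_le_two_mul_mul_log_two {C : ℝ} (hC : 1 ≤ C) :
    log C + 1 ≤ 2 * C * log 2 := by
  have := log_le_sub_one_of_pos (by linarith : 0 < C)
  nlinarith [log_two_gt_d9]

lemma log_four_mul_le_two_mul_log_add_one {t : ℝ} (ht : 0 < t) :
    log (4 * t) ≤ 2 * log (t + 1) := by
  calc log (4 * t) ≤ log ((t + 1) ^ 2) :=
        log_le_log (by positivity) (by nlinarith [sq_nonneg (t - 1)])
    _ = 2 * log (t + 1) := by rw [log_pow]; norm_num

lemma log_add_one_le_two_mul_mul_log_div_add_one {C x : ℝ} (hC : 1 ≤ C) (hx : C ≤ x) :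
    log x + 1 ≤ 2 * C * log (x / C + 1) := by
  have hC₀ : 0 < C := by linarith
  have hx₀ : 0 < x := hC₀.trans_le hx
  have hamgm := log_four_mul_le_two_mul_log_add_one (div_pos hx₀ hC₀)
  rw [log_mul (by norm_num) (div_pos hx₀ hC₀).ne', log_div hx₀.ne' hC₀.ne',
    show (4 : ℝ) = 2 ^ 2 by norm_num, log_pow] at hamgm
  have hlog : log C ≤ log x := log_le_log hC₀ hx
  -- `C * hamgm` leaves `(C - 1) (log x - log C) + (2C log 2 - log C - 1) ≥ 0` to check
  nlinarith [log_add_one_le_two_mul_mul_log_two hC,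
    mul_le_mul_of_nonneg_left (sub_nonneg.mpr hlog) (sub_nonneg.mpr hC)]

lemma log_div_two_add_self_le_two_mul_mul_log_two {C : ℝ} (hC : 1 ≤ C) :
    log C / 2 + C ≤ 2 * C * log 2 := by
  have he : exp 1 * log C ≤ C := by
    simpa [exp_log (by linarith : 0 < C)] using exp_one_mul_le_exp (x := log C)
  nlinarith [exp_one_gt_d9, log_two_gt_d9, log_nonneg hC]

end Real

noncomputable def bennettGap (C y : ℝ) : ℝ :=
  (y + C) * log (y / C + 1) - y - y * log y / (2 * C)

lemma hasDerivAt_bennettGap {C x : ℝ} (hC : 0 < C) (hx : 0 < x) :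
    HasDerivAt (bennettGap C) (log (x / C + 1) - (log x + 1) / (2 * C)) x := by
  have hq : x / C + 1 ≠ 0 := by positivity
  have hlog := (((hasDerivAt_id' x).div_const C).add_const 1).log hq
  have h := ((((hasDerivAt_id' x).add_const C).mul hlog).sub (hasDerivAt_id' x)).sub
    ((hasDerivAt_mul_log hx.ne').div_const (2 * C))
  refine h.congr_deriv ?_
  field_simp
  ring

lemma monotoneOn_bennettGap {C : ℝ} (hC : 1 ≤ C) : MonotoneOn (bennettGap C) (Ici C) := by
  have hderiv : ∀ x ∈ Ici C, HasDerivAt (bennettGap C)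
      (log (x / C + 1) - (log x + 1) / (2 * C)) x :=
    fun x hx => hasDerivAt_bennettGap (by linarith) (by linarith [mem_Ici.mp hx])
  refine monotoneOn_of_hasDerivWithinAt_nonneg (convex_Ici C)
    (fun x hx => (hderiv x hx).continuousAt.continuousWithinAt)
    (fun x hx => (hderiv x (interior_subset hx)).hasDerivWithinAt) fun x hx => ?_
  rw [interior_Ici] at hx
  rw [sub_nonneg, div_le_iff₀ (by linarith), mul_comm]
  exact log_add_one_le_two_mul_mul_log_div_add_one hC hx.le

lemma bennettGap_self_nonneg {C : ℝ} (hC : 1 ≤ C) : 0 ≤ bennettGap C C := by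
  have hC₀ : C ≠ 0 := by linarith
  have h := log_div_two_add_self_le_two_mul_mul_log_two hC
  have hval : bennettGap C C = 2 * C * log 2 - C - log C / 2 := by
    rw [bennettGap, div_self hC₀, one_add_one_eq_two]
    field_simp
    ring
  linarith

theorem stmt_1 (δ C : ℝ) (hC : 1 ≤ C) (hδ : C ≤ δ) :
    (δ + C) * Real.log (δ / C + 1) - δ ≥ (1 / (2 * C)) * δ * Real.log δ := by
  have h := (bennettGap_self_nonneg hC).trans
    (monotoneOn_bennettGap hC self_mem_Ici hδ hδ)
  rw [bennettGap] at h
  linarith [show 1 / (2 * C) * δ * log δ = δ * log δ / (2 * C) by ring]
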